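/- Let f : [0,1] → [0,∞) satisfy f(p) = f(1−p) for all p ∈ [0,1], with p ↦ f(p)/p non-increasing on (0,1]. Let 0 ≤ p_1 ≤ … ≤ p_m ≤ 1, let 0 ≤ k ≤ m−2 and k+2 ≤ i ≤ m. Then p_{k+1}·C_f(m−k−1; p_{−(k+1)}) − p_i·C_f(m−k−1; p_{−i}) ≤ (p_{k+1} − p_i)·C_f(m−k−1; p_{−(k+1,i)}) + p_{k+1}·f(p_i) − p_i·f(p_{k+1}), where p_{−(k+1,i)} denotes the list with both entries k+1 and i removed. -/

import Mathlib

/-!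
On a sorted parameter list it is optimal to compute `Π_θ` by querying first the pivot, the node
with the `θ`-th largest parameter (`pivotOptimal`). Granting this for `p_{-i}`, whose pivot is node
`k+1`, `C_f(m-k-1; p_{-i})` is exactly the cost of querying node `k+1` first, while
`C_f(m-k-1; p_{-(k+1)})` is at most the cost of querying node `i` first; the inequality is then
linear algebra in the two expansions.

The pivot rule is proved by strong induction on the length. A node above the pivot loses to the
pivot by the inequality above added to its analogue with weights `1 - p`
(`one_sub_mul_cost_eraseIdx_sub_le`). That analogue is proved by a nested induction that queries
the common pivot first; its base case is `(1 - q) f(p) ≤ (1 - p) f(q)` for `p ≤ q`, which comes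
from the monotonicity of `f(p)/p` and the symmetry of `f`. Nodes below the pivot are reduced to
this case by the duality `p ↦ 1 - p`, `θ ↦ m + 1 - θ`, which preserves `C_f` because `f` is
symmetric.
-/

/-- The optimal expected cost `C_f(θ; p)` of sequentially computing the Boolean
threshold function `Π_θ` on independent Bernoulli variables with parameters given by
the list `p`, where querying a node with parameter `q` costs `f q`.
`cost f θ p = 0` if `θ = 0` or `θ > p.length`, and otherwise it is the minimum over
nodes `i` of `f p_i + p_i • cost f (θ-1) p_{-i} + (1 - p_i) • cost f θ p_{-i}`. -/
noncomputable def cost (f : ℝ → ℝ) : ℕ → List ℝ → ℝ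
  | 0, _ => 0
  | (θ+1), p =>
      if p.length < θ + 1 then 0
      else ⨅ i : Fin p.length,
        (f (p.get i) + p.get i * cost f θ (p.eraseIdx i.1)
          + (1 - p.get i) * cost f (θ+1) (p.eraseIdx i.1))
termination_by θ p => p.length
decreasing_by
  all_goals (have h := i.isLt; simp [List.length_eraseIdx, h]; omega)

open Set

namespace List

variable {α : Type*} {l : List α} {i j : ℕ}

theorem getD_eraseIdx_of_lt (d : α) (h : j < i) : (l.eraseIdx i).getD j d = l.getD j d := by
  simp only [getD_eq_getElem?_getD, getElem?_eraseIdx, if_pos h]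

theorem getD_eraseIdx_pred (d : α) (h : i < j) : (l.eraseIdx i).getD (j - 1) d = l.getD j d := by
  simp only [getD_eq_getElem?_getD, getElem?_eraseIdx, if_neg (show ¬j - 1 < i by omega),
    Nat.sub_add_cancel (show 1 ≤ j by omega)]

theorem eraseIdx_eraseIdx_pred (h : i < j) :
    (l.eraseIdx j).eraseIdx i = (l.eraseIdx i).eraseIdx (j - 1) := by
  refine ext_getElem? fun n => ?_
  simp only [getElem?_eraseIdx]
  split_ifs <;> first | rfl | omega

theorem reverse_eraseIdx (hj : j < l.length) :
    (l.eraseIdx j).reverse = l.reverse.eraseIdx (l.length - 1 - j) := by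
  refine ext_getElem? fun n => ?_
  rw [getElem?_eraseIdx]
  rcases lt_or_ge n (l.length - 1) with hn | hn
  · rw [getElem?_reverse (by rw [length_eraseIdx_of_lt hj]; omega), getElem?_eraseIdx,
      length_eraseIdx_of_lt hj]
    split_ifs <;> rw [getElem?_reverse (by omega)] <;> congr 1 <;> omega
  · rw [getElem?_eq_none (by simp [length_eraseIdx_of_lt hj]; omega)]
    split_ifs <;> rw [getElem?_eq_none (by simp; omega)]

theorem forall_mem_eraseIdx {p : α → Prop} (h : ∀ x ∈ l, p x) (j : ℕ) :
    ∀ x ∈ l.eraseIdx j, p x :=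
  fun _ hx => h _ (mem_of_mem_eraseIdx hx)

end List

/-- Complementing the parameters turns `Π_θ` into the negation of `Π_{m+1-θ}`; reversing keeps
sorted lists sorted. -/
def dual (l : List ℝ) : List ℝ := (l.map (1 - ·)).reverse

@[simp] theorem length_dual (l : List ℝ) : (dual l).length = l.length := by simp [dual]

theorem getD_dual {l : List ℝ} {j : ℕ} (hj : j < l.length) :
    (dual l).getD (l.length - 1 - j) 0 = 1 - l.getD j 0 := by
  rw [dual, List.getD_eq_getElem?_getD, List.getElem?_reverse (by simp; omega), List.length_map,
    show l.length - 1 - (l.length - 1 - j) = j by omega, List.getElem?_map,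
    List.getElem?_eq_getElem hj, List.getD_eq_getElem l 0 hj]
  rfl

theorem dual_eraseIdx {l : List ℝ} {j : ℕ} (hj : j < l.length) :
    dual (l.eraseIdx j) = (dual l).eraseIdx (l.length - 1 - j) := by
  rw [dual, dual, ← List.eraseIdx_map, List.reverse_eraseIdx (by simpa using hj), List.length_map]

theorem getD_mem_Icc {l : List ℝ} (hl : ∀ x ∈ l, x ∈ Icc (0:ℝ) 1) (j : ℕ) :
    l.getD j 0 ∈ Icc (0:ℝ) 1 := by
  rcases lt_or_ge j l.length with hj | hj
  · exact List.getD_eq_getElem l 0 hj ▸ hl _ (l.getElem_mem hj)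
  · rw [List.getD_eq_default l 0 hj]
    exact ⟨le_rfl, zero_le_one⟩

/-- The expected cost of computing `Π_{θ+1}` by first querying a node with parameter `x` and
then proceeding optimally on the remaining parameters `r`. -/
noncomputable def queryCost (f : ℝ → ℝ) (θ : ℕ) (x : ℝ) (r : List ℝ) : ℝ :=
  f x + x * cost f θ r + (1 - x) * cost f (θ + 1) r

section Cost

variable {f : ℝ → ℝ} {l : List ℝ} {θ j : ℕ}

theorem cost_zero (f : ℝ → ℝ) (l : List ℝ) : cost f 0 l = 0 := by
  rw [cost]

theorem cost_of_length_lt (h : l.length < θ) : cost f θ l = 0 := by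
  cases θ with
  | zero => exact cost_zero f l
  | succ θ => rw [cost, if_pos h]

theorem cost_succ_eq_iInf (h : θ + 1 ≤ l.length) :
    cost f (θ + 1) l = ⨅ j : Fin l.length, queryCost f θ (l.getD j 0) (l.eraseIdx j) := by
  rw [cost, if_neg (by omega)]
  simp only [List.getD_eq_getElem l 0 (Fin.is_lt _), List.get_eq_getElem, queryCost]

theorem cost_succ_le_queryCost (hθ : θ + 1 ≤ l.length) (hj : j < l.length) :
    cost f (θ + 1) l ≤ queryCost f θ (l.getD j 0) (l.eraseIdx j) := by
  rw [cost_succ_eq_iInf hθ]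
  exact ciInf_le (Set.finite_range _).bddBelow (⟨j, hj⟩ : Fin l.length)

theorem le_cost_succ {c : ℝ} (hθ : θ + 1 ≤ l.length)
    (h : ∀ j < l.length, c ≤ queryCost f θ (l.getD j 0) (l.eraseIdx j)) :
    c ≤ cost f (θ + 1) l := by
  have : Nonempty (Fin l.length) := ⟨⟨0, by omega⟩⟩
  rw [cost_succ_eq_iInf hθ]
  exact le_ciInf fun j => h j j.2

theorem cost_nonneg (hf : ∀ x ∈ Icc (0:ℝ) 1, 0 ≤ f x) {l : List ℝ}
    (hl : ∀ x ∈ l, x ∈ Icc (0:ℝ) 1) : ∀ θ, 0 ≤ cost f θ l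
  | 0 => (cost_zero f l).ge
  | θ + 1 => by
    rcases lt_or_ge l.length (θ + 1) with hshort | hθ
    · exact (cost_of_length_lt hshort).ge
    rw [cost_succ_eq_iInf hθ]
    refine Real.iInf_nonneg fun j => ?_
    have hx := getD_mem_Icc hl j
    have hr := List.forall_mem_eraseIdx hl j
    exact add_nonneg (add_nonneg (hf _ hx) (mul_nonneg hx.1 (cost_nonneg hf hr θ)))
      (mul_nonneg (sub_nonneg.2 hx.2) (cost_nonneg hf hr (θ + 1)))
termination_by l.length
decreasing_by all_goals simp [List.length_eraseIdx_of_lt j.2]; omega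

theorem queryCost_eq_queryCost_dual (hsym : ∀ x ∈ Icc (0:ℝ) 1, f x = f (1 - x)) {x : ℝ}
    (hx : x ∈ Icc (0:ℝ) 1) {r : List ℝ}
    (hr : ∀ θ, cost f θ r = cost f (r.length + 1 - θ) (dual r)) {t s : ℕ}
    (hts : r.length = t + s) :
    queryCost f t x r = queryCost f s (1 - x) (dual r) := by
  unfold queryCost
  rw [hr t, hr (t + 1), ← hsym x hx, show r.length + 1 - t = s + 1 by omega,
    show r.length + 1 - (t + 1) = s by omega]
  ring

theorem queryCost_eraseIdx_eq_dual (hsym : ∀ x ∈ Icc (0:ℝ) 1, f x = f (1 - x))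
    (hl : ∀ x ∈ l, x ∈ Icc (0:ℝ) 1) (hj : j < l.length) {t s : ℕ}
    (hts : l.length = t + s + 1)
    (hr : ∀ θ, cost f θ (l.eraseIdx j)
      = cost f ((l.eraseIdx j).length + 1 - θ) (dual (l.eraseIdx j))) :
    queryCost f t (l.getD j 0) (l.eraseIdx j)
      = queryCost f s ((dual l).getD (l.length - 1 - j) 0)
          ((dual l).eraseIdx (l.length - 1 - j)) := by
  rw [getD_dual hj, ← dual_eraseIdx hj]
  exact queryCost_eq_queryCost_dual hsym (getD_mem_Icc hl j) hr
    (by rw [List.length_eraseIdx_of_lt hj]; omega)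

theorem cost_dual (hsym : ∀ x ∈ Icc (0:ℝ) 1, f x = f (1 - x)) {l : List ℝ}
    (hl : ∀ x ∈ l, x ∈ Icc (0:ℝ) 1) :
    ∀ θ, cost f θ l = cost f (l.length + 1 - θ) (dual l)
  | 0 => by rw [cost_zero, cost_of_length_lt (by simp)]
  | t + 1 => by
    rcases lt_or_ge l.length (t + 1) with hshort | ht
    · rw [cost_of_length_lt hshort, show l.length + 1 - (t + 1) = 0 by omega, cost_zero]
    obtain ⟨s, hts⟩ : ∃ s, l.length = t + s + 1 := ⟨l.length - (t + 1), by omega⟩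
    have key : ∀ j < l.length, queryCost f t (l.getD j 0) (l.eraseIdx j)
        = queryCost f s ((dual l).getD (l.length - 1 - j) 0)
            ((dual l).eraseIdx (l.length - 1 - j)) := fun j hj =>
      queryCost_eraseIdx_eq_dual hsym hl hj hts
        (cost_dual hsym (List.forall_mem_eraseIdx hl j))
    rw [show l.length + 1 - (t + 1) = s + 1 by omega]
    apply le_antisymm
    · refine le_cost_succ (by simp; omega) fun j hj => ?_
      rw [length_dual] at hj
      have hj' := key (l.length - 1 - j) (by omega)
      rw [Nat.sub_sub_self (by omega)] at hj'
      exact hj' ▸ cost_succ_le_queryCost ht (by omega)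
    · refine le_cost_succ ht fun j hj => ?_
      exact key j hj ▸ cost_succ_le_queryCost (by simp; omega) (by simp; omega)
termination_by l.length
decreasing_by simp [List.length_eraseIdx_of_lt hj]; omega

end Cost

structure IsSortedProbs (l : List ℝ) : Prop where
  sortedLE : l.SortedLE
  mem_Icc : ∀ x ∈ l, x ∈ Icc (0:ℝ) 1

namespace IsSortedProbs

variable {l : List ℝ}

theorem eraseIdx (hl : IsSortedProbs l) (j : ℕ) : IsSortedProbs (l.eraseIdx j) :=
  ⟨(hl.sortedLE.pairwise.eraseIdx j).sortedLE, List.forall_mem_eraseIdx hl.mem_Icc j⟩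

theorem dual (hl : IsSortedProbs l) : IsSortedProbs (dual l) := by
  refine ⟨(List.pairwise_reverse.2 (List.pairwise_map.2 ?_)).sortedLE, ?_⟩
  · exact hl.sortedLE.pairwise.imp fun h => sub_le_sub_left h 1
  · simp only [_root_.dual, List.mem_reverse, List.mem_map, forall_exists_index, and_imp]
    rintro _ x hx rfl
    have := hl.mem_Icc x hx
    constructor <;> linarith [this.1, this.2]

theorem getD_le_getD (hl : IsSortedProbs l) {i j : ℕ} (hij : i ≤ j) (hj : j < l.length) :
    l.getD i 0 ≤ l.getD j 0 := by
  rw [List.getD_eq_getElem l 0 (hij.trans_lt hj), List.getD_eq_getElem l 0 hj]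
  exact hl.sortedLE.getElem_le_getElem_of_le hij

end IsSortedProbs

structure AdmissibleCost (f : ℝ → ℝ) : Prop where
  nonneg : ∀ x ∈ Icc (0:ℝ) 1, 0 ≤ f x
  symm : ∀ x ∈ Icc (0:ℝ) 1, f x = f (1 - x)
  antitoneOn_div : AntitoneOn (fun x => f x / x) (Ioc 0 1)

theorem AdmissibleCost.one_sub_mul_le_one_sub_mul {f : ℝ → ℝ} (hf : AdmissibleCost f)
    {a b : ℝ} (ha : a ∈ Icc (0:ℝ) 1) (hb : b ∈ Icc (0:ℝ) 1) (hab : a ≤ b) :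
    (1 - b) * f a ≤ (1 - a) * f b := by
  rcases hb.2.eq_or_lt with rfl | hb1
  · simpa using mul_nonneg (sub_nonneg.2 ha.2) (hf.nonneg 1 hb)
  have hdiv := hf.antitoneOn_div ⟨sub_pos.2 hb1, by linarith [hb.1]⟩
    ⟨by linarith, by linarith [ha.1]⟩ (sub_le_sub_left hab 1)
  rw [div_le_div_iff₀ (by linarith) (by linarith), ← hf.symm a ha, ← hf.symm b hb] at hdiv
  linarith

section Pivot

variable {f : ℝ → ℝ} {l : List ℝ} {θ v K J : ℕ}

def PivotOptimal (f : ℝ → ℝ) (l : List ℝ) : Prop :=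
  ∀ θ, θ + 1 ≤ l.length → cost f (θ + 1) l
    = queryCost f θ (l.getD (l.length - (θ + 1)) 0) (l.eraseIdx (l.length - (θ + 1)))

theorem PivotOptimal.cost_eq (H : PivotOptimal f l) (hv : l.length = θ + v + 1) :
    cost f (θ + 1) l = queryCost f θ (l.getD v 0) (l.eraseIdx v) := by
  rw [H θ (by omega), show l.length - (θ + 1) = v by omega]

theorem cost_eraseIdx_eq_queryCost (H : PivotOptimal f (l.eraseIdx J)) (hKJ : K < J)
    (hJ : J < l.length) (hθ : l.length = θ + K + 2) :
    cost f (θ + 1) (l.eraseIdx J) = queryCost f θ (l.getD K 0) ((l.eraseIdx J).eraseIdx K) := by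
  rw [H.cost_eq (v := K) (by rw [List.length_eraseIdx_of_lt hJ]; omega),
    List.getD_eraseIdx_of_lt _ hKJ]

theorem cost_eraseIdx_le_queryCost_above (hKJ : K < J) (hJ : J < l.length)
    (hθ : θ + 2 ≤ l.length) :
    cost f (θ + 1) (l.eraseIdx K) ≤ queryCost f θ (l.getD J 0) ((l.eraseIdx J).eraseIdx K) := by
  have := cost_succ_le_queryCost (f := f) (l := l.eraseIdx K) (θ := θ) (j := J - 1)
    (by rw [List.length_eraseIdx_of_lt (by omega)]; omega)
    (by rw [List.length_eraseIdx_of_lt (by omega)]; omega)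
  rwa [List.getD_eraseIdx_pred _ hKJ, ← List.eraseIdx_eraseIdx_pred hKJ] at this

theorem cost_eraseIdx_le_queryCost_below (hvK : v < K) (hK : K < l.length)
    (hθ : θ + 2 ≤ l.length) :
    cost f (θ + 1) (l.eraseIdx K)
      ≤ queryCost f θ (l.getD v 0) ((l.eraseIdx v).eraseIdx (K - 1)) := by
  have := cost_succ_le_queryCost (f := f) (l := l.eraseIdx K) (θ := θ) (j := v)
    (by rw [List.length_eraseIdx_of_lt hK]; omega) (by rw [List.length_eraseIdx_of_lt hK]; omega)
  rwa [List.getD_eraseIdx_of_lt _ hvK, List.eraseIdx_eraseIdx_pred hvK] at this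

theorem mul_sub_mul_le_of_le_queryCost {a b x y : ℝ} {r : List ℝ} (ha : 0 ≤ a)
    (hx : x ≤ queryCost f θ b r) (hy : y = queryCost f θ a r) :
    a * x - b * y ≤ (a - b) * cost f (θ + 1) r + a * f b - b * f a := by
  have := mul_le_mul_of_nonneg_left hx ha
  rw [hy]
  unfold queryCost at *
  linarith

theorem one_sub_mul_sub_mul_le_of_le_queryCost {a b x y : ℝ} {r : List ℝ} (ha : a ≤ 1)
    (hx : x ≤ queryCost f θ b r) (hy : y = queryCost f θ a r) :
    (1 - a) * x - (1 - b) * y ≤ (b - a) * cost f θ r + (1 - a) * f b - (1 - b) * f a := by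
  have := mul_le_mul_of_nonneg_left hx (sub_nonneg.2 ha)
  rw [hy]
  unfold queryCost at *
  linarith

theorem one_sub_mul_queryCost_sub_le {a b w : ℝ} (hw : w ∈ Icc (0:ℝ) 1) {rK rJ s : List ℝ}
    (h₁ : (1 - a) * cost f (θ + 1) rK - (1 - b) * cost f (θ + 1) rJ
      ≤ (b - a) * cost f θ s + (1 - a) * f b - (1 - b) * f a)
    (h₂ : (1 - a) * cost f (θ + 2) rK - (1 - b) * cost f (θ + 2) rJ
      ≤ (b - a) * cost f (θ + 1) s + (1 - a) * f b - (1 - b) * f a) :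
    (1 - a) * queryCost f (θ + 1) w rK - (1 - b) * queryCost f (θ + 1) w rJ
      ≤ (b - a) * queryCost f θ w s + (1 - a) * f b - (1 - b) * f a := by
  have := mul_le_mul_of_nonneg_left h₁ hw.1
  have := mul_le_mul_of_nonneg_left h₂ (sub_nonneg.2 hw.2)
  unfold queryCost
  linarith

theorem mul_cost_eraseIdx_sub_le (H : PivotOptimal f (l.eraseIdx J)) (ha : 0 ≤ l.getD K 0)
    (hKJ : K < J) (hJ : J < l.length) (hθ : l.length = θ + K + 2) :
    l.getD K 0 * cost f (θ + 1) (l.eraseIdx K) - l.getD J 0 * cost f (θ + 1) (l.eraseIdx J)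
      ≤ (l.getD K 0 - l.getD J 0) * cost f (θ + 1) ((l.eraseIdx J).eraseIdx K)
        + l.getD K 0 * f (l.getD J 0) - l.getD J 0 * f (l.getD K 0) :=
  mul_sub_mul_le_of_le_queryCost ha (cost_eraseIdx_le_queryCost_above hKJ hJ (by omega))
    (cost_eraseIdx_eq_queryCost H hKJ hJ hθ)

theorem one_sub_mul_cost_eraseIdx_sub_le (hf : AdmissibleCost f) {l : List ℝ}
    (hl : IsSortedProbs l) (H : ∀ q, IsSortedProbs q → q.length < l.length → PivotOptimal f q)
    {K J θ : ℕ} (hKJ : K < J) (hJ : J < l.length) (hθ : l.length ≤ θ + K + 2) :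
    (1 - l.getD K 0) * cost f (θ + 1) (l.eraseIdx K)
        - (1 - l.getD J 0) * cost f (θ + 1) (l.eraseIdx J)
      ≤ (l.getD J 0 - l.getD K 0) * cost f θ ((l.eraseIdx J).eraseIdx K)
        + (1 - l.getD K 0) * f (l.getD J 0) - (1 - l.getD J 0) * f (l.getD K 0) := by
  have hK := getD_mem_Icc hl.mem_Icc K
  have hab := hl.getD_le_getD hKJ.le hJ
  have hlK : (l.eraseIdx K).length = l.length - 1 := List.length_eraseIdx_of_lt (by omega)
  have hlJ : (l.eraseIdx J).length = l.length - 1 := List.length_eraseIdx_of_lt hJ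
  rcases lt_or_ge l.length (θ + 2) with hshort | hθ2
  · rw [cost_of_length_lt (by omega), cost_of_length_lt (by omega)]
    have := mul_nonneg (sub_nonneg.2 hab)
      (cost_nonneg hf.nonneg ((hl.eraseIdx J).eraseIdx K).mem_Icc θ)
    linarith [hf.one_sub_mul_le_one_sub_mul hK (getD_mem_Icc hl.mem_Icc J) hab]
  rcases hθ.eq_or_lt with hpiv | hlow
  · exact one_sub_mul_sub_mul_le_of_le_queryCost hK.2
      (cost_eraseIdx_le_queryCost_above hKJ hJ hθ2)
      (cost_eraseIdx_eq_queryCost (H _ (hl.eraseIdx J) (by omega)) hKJ hJ hpiv)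
  -- The pivot `v` of `l.eraseIdx J` lies below `K`: query it first on every list and recurse
  -- on `l.eraseIdx v`.
  obtain ⟨u, rfl⟩ : ∃ u, θ = u + 1 := ⟨θ - 1, by omega⟩
  obtain ⟨v, hv⟩ : ∃ v, l.length = u + v + 3 := ⟨l.length - (u + 3), by omega⟩
  have hvK : v < K := by omega
  have hvJ : v < J := by omega
  have hQ : (l.eraseIdx v).length = l.length - 1 := List.length_eraseIdx_of_lt (by omega)
  have HQ : ∀ q, IsSortedProbs q → q.length < (l.eraseIdx v).length → PivotOptimal f q :=
    fun q hq hlt => H q hq (by omega)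
  have ih₁ := one_sub_mul_cost_eraseIdx_sub_le hf (hl.eraseIdx v) HQ (K := K - 1) (J := J - 1)
    (θ := u) (by omega) (by omega) (by omega)
  have ih₂ := one_sub_mul_cost_eraseIdx_sub_le hf (hl.eraseIdx v) HQ (K := K - 1) (J := J - 1)
    (θ := u + 1) (by omega) (by omega) (by omega)
  rw [List.getD_eraseIdx_pred _ hvK, List.getD_eraseIdx_pred _ hvJ] at ih₁ ih₂
  have hJv : cost f (u + 2) (l.eraseIdx J)
      = queryCost f (u + 1) (l.getD v 0) ((l.eraseIdx v).eraseIdx (J - 1)) := by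
    rw [cost_eraseIdx_eq_queryCost (H _ (hl.eraseIdx J) (by omega)) hvJ hJ (by omega),
      List.eraseIdx_eraseIdx_pred hvJ]
  have hJKv : cost f (u + 1) ((l.eraseIdx J).eraseIdx K)
      = queryCost f u (l.getD v 0) (((l.eraseIdx v).eraseIdx (J - 1)).eraseIdx (K - 1)) := by
    have hS : ((l.eraseIdx J).eraseIdx K).length = l.length - 2 := by
      rw [List.length_eraseIdx_of_lt (by omega), hlJ]; omega
    rw [(H _ ((hl.eraseIdx J).eraseIdx K) (by omega)).cost_eq (v := v) (by omega),
      List.getD_eraseIdx_of_lt _ hvK, List.getD_eraseIdx_of_lt _ hvJ,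
      List.eraseIdx_eraseIdx_pred hvK, List.eraseIdx_eraseIdx_pred hvJ]
  rw [hJv, hJKv]
  refine le_trans ?_ (one_sub_mul_queryCost_sub_le (getD_mem_Icc hl.mem_Icc v) ih₁ ih₂)
  linarith [mul_le_mul_of_nonneg_left (cost_eraseIdx_le_queryCost_below (f := f) (l := l) hvK
    (by omega) (by omega)) (sub_nonneg.2 hK.2)]
termination_by l.length
decreasing_by all_goals omega

theorem queryCost_pivot_le (hf : AdmissibleCost f) (hl : IsSortedProbs l)
    (H : ∀ q, IsSortedProbs q → q.length < l.length → PivotOptimal f q)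
    (hv : l.length = θ + v + 2) {j : ℕ} (hvj : v < j) (hj : j < l.length) :
    queryCost f (θ + 1) (l.getD v 0) (l.eraseIdx v)
      ≤ queryCost f (θ + 1) (l.getD j 0) (l.eraseIdx j) := by
  have h₁ := mul_cost_eraseIdx_sub_le (H _ (hl.eraseIdx j)
    (by rw [List.length_eraseIdx_of_lt hj]; omega)) (getD_mem_Icc hl.mem_Icc v).1 hvj hj hv
  have h₂ := one_sub_mul_cost_eraseIdx_sub_le hf hl H (θ := θ + 1) hvj hj (by omega)
  unfold queryCost
  linarith

theorem pivotOptimal (hf : AdmissibleCost f) {l : List ℝ} (hl : IsSortedProbs l) :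
    PivotOptimal f l := by
  intro θ hθ
  have H : ∀ q, IsSortedProbs q → q.length < l.length → PivotOptimal f q :=
    fun q hq _ => pivotOptimal hf hq
  obtain ⟨v, hv⟩ : ∃ v, l.length = θ + v + 1 := ⟨l.length - (θ + 1), by omega⟩
  rw [show l.length - (θ + 1) = v by omega]
  refine le_antisymm (cost_succ_le_queryCost hθ (by omega)) (le_cost_succ hθ fun j hj => ?_)
  rcases lt_trichotomy j v with hjv | rfl | hvj
  · obtain ⟨w, rfl⟩ : ∃ w, v = w + 1 := ⟨v - 1, by omega⟩
    rw [queryCost_eraseIdx_eq_dual hf.symm hl.mem_Icc hj hv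
        (cost_dual hf.symm (hl.eraseIdx j).mem_Icc),
      queryCost_eraseIdx_eq_dual hf.symm hl.mem_Icc (by omega) hv
        (cost_dual hf.symm (hl.eraseIdx _).mem_Icc), show l.length - 1 - (w + 1) = θ by omega]
    exact queryCost_pivot_le hf hl.dual (by simpa using H) (by simp; omega) (by omega)
      (by simp; omega)
  · exact le_rfl
  · obtain ⟨u, rfl⟩ : ∃ u, θ = u + 1 := ⟨θ - 1, by omega⟩
    exact queryCost_pivot_le hf hl H (by omega) hvj hj
termination_by l.length

end Pivot

/-- Lemma 3 of the paper: for `0 ≤ k ≤ m-2` and `k+2 ≤ i ≤ m` (1-based indices),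
`p_{k+1} C_f(m-k-1; p_{-(k+1)}) - p_i C_f(m-k-1; p_{-i})` is bounded by
`(p_{k+1} - p_i) C_f(m-k-1; p_{-(k+1,i)}) + p_{k+1} f(p_i) - p_i f(p_{k+1})`. -/
theorem stmt_3 (f : ℝ → ℝ)
    (hf_nonneg : ∀ x ∈ Set.Icc (0:ℝ) 1, 0 ≤ f x)
    (hf_sym : ∀ x ∈ Set.Icc (0:ℝ) 1, f x = f (1 - x))
    (hf_mono : AntitoneOn (fun x => f x / x) (Set.Ioc (0:ℝ) 1))
    (m : ℕ) (p : Fin m → ℝ)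
    (hp0 : ∀ i, 0 ≤ p i) (hp1 : ∀ i, p i ≤ 1) (hsorted : Monotone p)
    (k i : ℕ) (hk : k + 2 ≤ m) (hki : k + 2 ≤ i) (him : i ≤ m) :
    p ⟨k, by omega⟩ * cost f (m - k - 1) ((List.ofFn p).eraseIdx k)
      - p ⟨i - 1, by omega⟩ * cost f (m - k - 1) ((List.ofFn p).eraseIdx (i - 1))
    ≤ (p ⟨k, by omega⟩ - p ⟨i - 1, by omega⟩) *
        cost f (m - k - 1) (((List.ofFn p).eraseIdx (i - 1)).eraseIdx k)
      + p ⟨k, by omega⟩ * f (p ⟨i - 1, by omega⟩)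
      - p ⟨i - 1, by omega⟩ * f (p ⟨k, by omega⟩) := by
  have hl : IsSortedProbs (List.ofFn p) :=
    ⟨hsorted.sortedLE_ofFn, by simpa [List.mem_ofFn] using fun j => ⟨hp0 j, hp1 j⟩⟩
  have hp : ∀ j (hj : j < m), (List.ofFn p).getD j 0 = p ⟨j, hj⟩ := fun j hj => by
    rw [List.getD_eq_getElem _ _ (by simpa using hj), List.getElem_ofFn]
  have key := mul_cost_eraseIdx_sub_le (pivotOptimal ⟨hf_nonneg, hf_sym, hf_mono⟩
    (hl.eraseIdx (i - 1))) (getD_mem_Icc hl.mem_Icc k).1 (K := k) (J := i - 1) (θ := m - k - 2)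
    (by omega) (by simp; omega) (by simp; omega)
  rwa [hp k (by omega), hp (i - 1) (by omega), show m - k - 2 + 1 = m - k - 1 by omega] at key
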